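/- Let A and B be r×r matrices and define the 2r×2r block upper-triangular matrix C = [[A, B],[0, A]]. Then for any t ≥ 0, exp(Ct) = [[exp(At), ∫₀ᵗ exp(A(t−s))·B·exp(As) ds],[0, exp(At)]]; in particular the upper-right r×r block of exp(Ct) equals ∫₀ᵗ exp(A(t−s)) B exp(As) ds. -/

import Mathlib

open Matrix intervalIntegral

attribute [local instance] Matrix.linftyOpNormedRing Matrix.linftyOpNormedAlgebra

/-!
Both sides solve `Φ' = C Φ`, `Φ 0 = 1`. For the right-hand side the only nontrivial block is
`Y t = ∫₀ᵗ exp((t-s)A) B exp(sA) ds = exp(tA) ∫₀ᵗ exp(-sA) B exp(sA) ds`; in this factored form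
the fundamental theorem of calculus gives `Y' = A Y + B exp(tA)`, which is exactly the
upper-right block of `C Φ`.
-/

open NormedSpace

section BanachAlgebra

variable {𝔸 : Type*} [NormedRing 𝔸] [NormedAlgebra ℝ 𝔸] [CompleteSpace 𝔸]

theorem exp_smul_mul_exp_neg_smul (x : 𝔸) (t : ℝ) : exp (t • x) * exp (-(t • x)) = 1 := by
  -- the algebraic API of `exp` is stated over `ℚ`
  let +nondep : NormedAlgebra ℚ 𝔸 := .restrictScalars ℚ ℝ 𝔸
  rw [← NormedSpace.exp_add_of_commute (Commute.refl _).neg_right, add_neg_cancel, exp_zero]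

theorem exp_sub_smul (x : 𝔸) (t s : ℝ) : exp ((t - s) • x) = exp (t • x) * exp (-(s • x)) := by
  let +nondep : NormedAlgebra ℚ 𝔸 := .restrictScalars ℚ ℝ 𝔸
  rw [← NormedSpace.exp_add_of_commute (((Commute.refl x).smul_left t).smul_right s).neg_right,
    sub_smul, sub_eq_add_neg]

theorem eq_exp_smul_of_hasDerivAt_mul {c : 𝔸} {Φ : ℝ → 𝔸}
    (hΦ : ∀ t, HasDerivAt Φ (c * Φ t) t) (h0 : Φ 0 = 1) (t : ℝ) : Φ t = exp (t • c) := by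
  have hderiv : ∀ u, HasDerivAt (fun u : ℝ => exp (u • -c) * Φ u) 0 u := fun u => by
    refine ((hasDerivAt_exp_smul_const' (-c) u).mul (hΦ u)).congr_deriv ?_
    rw [← mul_assoc, ← ((Commute.refl c).neg_right.smul_right u).exp_right.eq, neg_mul, neg_mul,
      neg_add_cancel]
  have hconst : exp (-(t • c)) * Φ t = 1 := by
    simpa [h0] using is_const_of_deriv_eq_zero (fun u => (hderiv u).differentiableAt)
      (fun u => (hderiv u).deriv) t 0
  calc Φ t = exp (t • c) * (exp (-(t • c)) * Φ t) := by
        rw [← mul_assoc, exp_smul_mul_exp_neg_smul, one_mul]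
    _ = exp (t • c) := by rw [hconst, mul_one]

theorem hasDerivAt_integral_exp_sub_smul_mul_mul_exp_smul (a b : 𝔸) (t : ℝ) :
    HasDerivAt (fun t : ℝ => ∫ s in (0 : ℝ)..t, exp ((t - s) • a) * b * exp (s • a))
      (a * (∫ s in (0 : ℝ)..t, exp ((t - s) • a) * b * exp (s • a)) + b * exp (t • a)) t := by
  let +nondep : NormedAlgebra ℚ 𝔸 := .restrictScalars ℚ ℝ 𝔸
  set f : ℝ → 𝔸 := fun s => exp (-(s • a)) * b * exp (s • a)
  have hf : Continuous f := by fun_prop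
  have hfactor : ∀ t : ℝ, ∫ s in (0 : ℝ)..t, exp ((t - s) • a) * b * exp (s • a)
      = exp (t • a) * ∫ s in (0 : ℝ)..t, f s := fun t => by
    have hmul := (ContinuousLinearMap.mul ℝ 𝔸 (exp (t • a))).intervalIntegral_comp_comm
      (hf.intervalIntegrable (μ := MeasureTheory.volume) 0 t)
    simp only [ContinuousLinearMap.mul_apply'] at hmul
    rw [← hmul]
    simp only [f, exp_sub_smul, mul_assoc]
  simp only [hfactor]
  refine ((hasDerivAt_exp_smul_const' a t).mul
    (hf.integral_hasStrictDerivAt 0 t).hasDerivAt).congr_deriv ?_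
  simp only [f, mul_assoc, ← mul_assoc (exp (t • a)), exp_smul_mul_exp_neg_smul, one_mul]

end BanachAlgebra

section BlockMatrix

variable {n : Type*} [Fintype n] [DecidableEq n]

theorem HasDerivAt.matrix_fromBlocks {A B C D : ℝ → Matrix n n ℝ} {A' B' C' D' : Matrix n n ℝ}
    {t : ℝ} (hA : HasDerivAt A A' t) (hB : HasDerivAt B B' t) (hC : HasDerivAt C C' t)
    (hD : HasDerivAt D D' t) :
    HasDerivAt (fun u => fromBlocks (A u) (B u) (C u) (D u)) (fromBlocks A' B' C' D') t :=
  let L : (Matrix n n ℝ × Matrix n n ℝ) × (Matrix n n ℝ × Matrix n n ℝ) →L[ℝ]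
      Matrix (n ⊕ n) (n ⊕ n) ℝ := LinearMap.toContinuousLinearMap
    { toFun := fun p => fromBlocks p.1.1 p.1.2 p.2.1 p.2.2
      map_add' := fun _ _ => (fromBlocks_add ..).symm
      map_smul' := fun _ _ => (fromBlocks_smul ..).symm }
  L.hasFDerivAt.comp_hasDerivAt t ((hA.prodMk hB).prodMk (hC.prodMk hD))

theorem exp_smul_fromBlocks_zero₂₁_self (A B : Matrix n n ℝ) (t : ℝ) :
    exp (t • fromBlocks A B 0 A) =
      fromBlocks (exp (t • A)) (∫ s in (0 : ℝ)..t, exp ((t - s) • A) * B * exp (s • A))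
        0 (exp (t • A)) := by
  symm
  apply eq_exp_smul_of_hasDerivAt_mul (t := t)
  · intro u
    refine ((hasDerivAt_exp_smul_const' A u).matrix_fromBlocks
      (hasDerivAt_integral_exp_sub_smul_mul_mul_exp_smul A B u) (hasDerivAt_const u 0)
      (hasDerivAt_exp_smul_const' A u)).congr_deriv ?_
    rw [fromBlocks_multiply]
    simp only [mul_zero, add_zero, zero_mul, zero_add]
    -- the two sides multiply with `Matrix.instHMulOfFintype` and with the normed-ring `Mul`
    rfl
  · simp [fromBlocks_one]

end BlockMatrix

theorem van_loan_block_exponential_general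
    {r : ℕ} (A B : Matrix (Fin r) (Fin r) ℝ) (t : ℝ) :
    NormedSpace.exp (t • Matrix.fromBlocks A B 0 A) =
      Matrix.fromBlocks (NormedSpace.exp (t • A))
        (∫ s in (0:ℝ)..t,
          NormedSpace.exp ((t - s) • A) * B * NormedSpace.exp (s • A))
        0 (NormedSpace.exp (t • A)) ∧
    (NormedSpace.exp (t • Matrix.fromBlocks A B 0 A)).toBlocks₁₂ =
      ∫ s in (0:ℝ)..t,
        NormedSpace.exp ((t - s) • A) * B * NormedSpace.exp (s • A) := by
  have h := exp_smul_fromBlocks_zero₂₁_self A B t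
  exact ⟨h, by rw [h, toBlocks_fromBlocks₁₂]⟩

/-- **Van Loan's identity.** Let `A` and `B` be `r×r` matrices and let
`C = [[A, B], [0, A]]` be the `2r×2r` block upper-triangular matrix.  Then for any
`t ≥ 0`, `exp(Ct) = [[exp(At), ∫₀ᵗ exp(A(t−s))·B·exp(As) ds], [0, exp(At)]]`; in
particular the upper-right `r×r` block of `exp(Ct)` equals
`∫₀ᵗ exp(A(t−s)) B exp(As) ds`. -/
theorem van_loan_block_exponential
    {r : ℕ} (A B : Matrix (Fin r) (Fin r) ℝ) (t : ℝ) (ht : 0 ≤ t) :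
    NormedSpace.exp (t • Matrix.fromBlocks A B 0 A) =
      Matrix.fromBlocks (NormedSpace.exp (t • A))
        (∫ s in (0:ℝ)..t,
          NormedSpace.exp ((t - s) • A) * B * NormedSpace.exp (s • A))
        0 (NormedSpace.exp (t • A)) ∧
    (NormedSpace.exp (t • Matrix.fromBlocks A B 0 A)).toBlocks₁₂ =
      ∫ s in (0:ℝ)..t,
        NormedSpace.exp ((t - s) • A) * B * NormedSpace.exp (s • A) :=
  van_loan_block_exponential_general A B t
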